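/- arXiv:2303.04288 — 3 statements merged into one kernel-verified Lean document; each statement's English description precedes it below -/
import Mathlib

section
/- Consider the Private Populous Estimator (PPE): given a dataset D = (X₁,...,X_m), a (possibly randomized) algorithm 𝒜 : 𝒳* → 𝒴, and parameters r, ε, δ > 0, z ≥ 1, t ∈ ℕ, PPE sets s = ⌊m/t⌋, computes Y_i = 𝒜(X_{(i−1)s+1},...,X_{is}) for i ∈ [t], computes q_i = (1/t)·|{j ∈ [t] : dist(Y_i,Y_j) ≤ r/(2z)}| and Q = (1/t)·Σ_{i∈[t]} q_i, samples Z from the truncated Laplace distribution TLap(2/t, ε, δ), sets Q̃ = Q + Z, outputs ⊥ if Q̃ < 0.8 + (2/(tε))·ln(1 + (e^ε − 1)/(2δ)), and otherwise sets j = min{i : q_i > 0.6} and returns Ỹ = ℬ(Y_j). Suppose (𝒴, dist) satisfies the z-approximate r-restricted triangle inequality, ℬ is an (r, ε, δ)-masking mechanism that is (α/(2z), β)-concentrated, α ≤ r/(2z), and t ≥ (20/ε)·ln(1 + (e^ε − 1)/(2δ)). If there exists Y* ∈ 𝒴 such that dist(Y*, Y_i) < α/(2z) for all i ∈ [t], then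 Pr[dist(Ỹ, Y*) > α] ≤ β (in particular, PPE does not output ⊥). -/
open MeasureTheory
open scoped Classical

/-- A measurable-space structure on `Option α`, via the identification with `α ⊕ Unit`. -/
noncomputable instance optionMeasurableSpace {α : Type*} [MeasurableSpace α] :
    MeasurableSpace (Option α) :=
  MeasurableSpace.comap (fun o => Option.elim o (Sum.inr ()) Sum.inl) inferInstance

/-- The truncated Laplace distribution `TLap(Δ, ε, δ)`: density proportional to
`exp (-ε |x| / Δ)` on `[-B, B]` where `B = (Δ/ε) * ln (1 + (e^ε - 1)/(2δ))`, zero outside. -/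
noncomputable def TLap (Δ ε δ : ℝ) : Measure ℝ :=
  let B := (Δ / ε) * Real.log (1 + (Real.exp ε - 1) / (2 * δ))
  let μ := MeasureTheory.volume.withDensity
    (Set.indicator (Set.Icc (-B) B) fun x => ENNReal.ofReal (Real.exp (-(ε * |x|) / Δ)))
  (μ Set.univ)⁻¹ • μ

/-- Lines 3–9 of the Private Populous Estimator, run from the realized outputs
`Y₁, …, Y_t` of the non-private algorithm `𝒜` on the `t` chunks of the dataset:
compute the closeness scores `q_i = (1/t)|{j : dist(Y_i, Y_j) ≤ r/(2z)}|` and their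
average `Q`, add truncated Laplace noise `Z ~ TLap(2/t, ε, δ)`, fail (output `none`,
i.e. `⊥`) if `Q + Z < 0.8 + (2/(tε)) ln(1 + (e^ε-1)/(2δ))`, and otherwise return
`Ỹ = ℬ(Y_j)` for the least index `j` with `q_j > 0.6`. -/
noncomputable def PPEfromOutputs {𝒴 : Type*} [MeasurableSpace 𝒴] (t : ℕ)
    (Y : Fin t → 𝒴) (ℬ : 𝒴 → Measure 𝒴)
    (dist : 𝒴 → 𝒴 → ℝ) (r ε δ z : ℝ) : Measure (Option 𝒴) :=
  (TLap (2 / t) ε δ).bind fun Zv =>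
    let q : Fin t → ℝ := fun i =>
      (1 / (t : ℝ)) * ((Finset.univ.filter fun j => dist (Y i) (Y j) ≤ r / (2 * z)).card : ℝ)
    let Q := (1 / (t : ℝ)) * ∑ i, q i
    if Q + Zv < 0.8 + (2 / (t * ε)) * Real.log (1 + (Real.exp ε - 1) / (2 * δ)) then
      Measure.dirac none
    else if h : (Finset.univ.filter fun i => (0.6 : ℝ) < q i).Nonempty then
      (ℬ (Y ((Finset.univ.filter fun i => (0.6 : ℝ) < q i).min' h))).map Option.some
    else Measure.dirac none

/-- Two distributions are `(ε, δ)`-indistinguishable. -/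
def Indist {𝒴 : Type*} [MeasurableSpace 𝒴] (ε δ : ℝ) (μ ν : Measure 𝒴) : Prop :=
  ∀ S : Set 𝒴, MeasurableSet S →
    μ S ≤ ENNReal.ofReal (Real.exp ε) * ν S + ENNReal.ofReal δ ∧
    ν S ≤ ENNReal.ofReal (Real.exp ε) * μ S + ENNReal.ofReal δ

/-! Every `Y i` lies within `α/(2z)` of `Y*`, so by the restricted triangle inequality all pairs
`Y i, Y j` are within `α ≤ r/(2z)` of each other: every score `q i` is `1`, and so is `Q`. The
truncated Laplace noise is bounded by `B = (2/(tε)) ln(1 + (e^ε - 1)/(2δ))`, and the lower bound on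
`t` gives `B ≤ 1/10`, hence `Q + Z ≥ 0.9 ≥ 0.8 + B` almost surely: PPE never fails and outputs
`ℬ (Y j)`. Off an event of probability `β` this lies within `α/(2z)` of `Y j`, hence within `α`
of `Y*`, again by the restricted triangle inequality. -/

section RestrictedTriangle

variable {X : Type*}

def RestrictedTriangle (d : X → X → ℝ) (r z : ℝ) : Prop :=
  ∀ a b c, d a b ≤ r → d b c ≤ r → d a c ≤ z * (d a b + d b c)

theorem RestrictedTriangle.le_of_le_div {d : X → X → ℝ} {r z α : ℝ}
    (h : RestrictedTriangle d r z) (hz : 0 < z) (hαr : α / (2 * z) ≤ r) {a b c : X}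
    (hab : d a b ≤ α / (2 * z)) (hbc : d b c ≤ α / (2 * z)) : d a c ≤ α :=
  calc d a c ≤ z * (d a b + d b c) := h a b c (hab.trans hαr) (hbc.trans hαr)
    _ ≤ z * (α / (2 * z) + α / (2 * z)) := by gcongr
    _ = α := by field_simp; ring

end RestrictedTriangle

theorem measurableEmbedding_some {α : Type*} [MeasurableSpace α] :
    MeasurableEmbedding (Option.some : α → Option α) where
  injective := Option.some_injective α
  measurable := fun _ ⟨s, hs, h⟩ => h ▸ measurable_inl hs
  measurableSet_image' := fun s hs => ⟨Sum.inl '' s, hs.inl_image, by ext (_ | y) <;> simp⟩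

theorem MeasureTheory.Measure.bind_le_of_ae_eq {α β : Type*} [MeasurableSpace α] [MeasurableSpace β]
    {μ : Measure α} {f : α → Measure β} {ν : Measure β} (hμ : μ Set.univ ≤ 1)
    (hf : ∀ᵐ x ∂μ, f x = ν) : μ.bind f ≤ ν := by
  rw [Measure.bind_congr_right hf, Measure.bind_const]
  intro s
  calc (μ Set.univ • ν) s = μ Set.univ * ν s := rfl
    _ ≤ 1 * ν s := by gcongr
    _ = ν s := one_mul _

theorem TLap_univ_le_one (Δ ε δ : ℝ) : TLap Δ ε δ Set.univ ≤ 1 :=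
  ENNReal.inv_mul_le_one _

theorem ae_mem_Icc_TLap (Δ ε δ : ℝ) :
    let B := (Δ / ε) * Real.log (1 + (Real.exp ε - 1) / (2 * δ))
    ∀ᵐ x ∂TLap Δ ε δ, x ∈ Set.Icc (-B) B := by
  intro B
  refine Measure.ae_smul_measure ?_ _
  rw [withDensity_indicator measurableSet_Icc]
  exact (withDensity_absolutelyContinuous _ _).ae_le (ae_restrict_mem measurableSet_Icc)

theorem log_one_add_exp_sub_one_div_pos {ε δ : ℝ} (hε : 0 < ε) (hδ : 0 < δ) :
    0 < Real.log (1 + (Real.exp ε - 1) / (2 * δ)) := by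
  have : 0 < Real.exp ε - 1 := by linarith [Real.add_one_lt_exp hε.ne']
  exact Real.log_pos (by linarith [div_pos this (by linarith : (0:ℝ) < 2 * δ)])

theorem PPEfromOutputs_le_map_some {𝒴 : Type*} [MeasurableSpace 𝒴] {t : ℕ} (ht : 0 < t)
    (Y : Fin t → 𝒴) (ℬ : 𝒴 → Measure 𝒴) (dist : 𝒴 → 𝒴 → ℝ) {r ε δ z : ℝ}
    (hclose : ∀ i j, dist (Y i) (Y j) ≤ r / (2 * z))
    (hnoise : 2 / (t * ε) * Real.log (1 + (Real.exp ε - 1) / (2 * δ)) ≤ 1 / 10) :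
    ∃ j, PPEfromOutputs t Y ℬ dist r ε δ z ≤ (ℬ (Y j)).map Option.some := by
  have hscore : ∀ i, (1 / (t : ℝ)) *
      ((Finset.univ.filter fun j => dist (Y i) (Y j) ≤ r / (2 * z)).card : ℝ) = 1 := by
    intro i
    rw [Finset.filter_true_of_mem fun j _ => hclose i j, Finset.card_univ, Fintype.card_fin]
    field_simp
  have hne : (Finset.univ.filter fun i : Fin t => (0.6 : ℝ) < (1 / (t : ℝ)) *
      ((Finset.univ.filter fun j => dist (Y i) (Y j) ≤ r / (2 * z)).card : ℝ)).Nonempty :=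
    ⟨⟨0, ht⟩, by simp only [Finset.mem_filter, Finset.mem_univ, true_and, hscore]; norm_num⟩
  refine ⟨Finset.min' _ hne, Measure.bind_le_of_ae_eq (TLap_univ_le_one _ _ _) ?_⟩
  filter_upwards [ae_mem_Icc_TLap (2 / t) ε δ] with Zv hZv
  simp only [hscore, Finset.sum_const, Finset.card_univ, Fintype.card_fin, nsmul_eq_mul, mul_one]
  have hmean : 1 / (t : ℝ) * t = 1 := by field_simp
  rw [div_div] at hZv
  rw [hmean, if_neg (by norm_num; linarith [hZv.1]), dif_pos (by simpa only [hscore] using hne)]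

theorem ppe_utility_general {𝒴 : Type*} [MeasurableSpace 𝒴]
    (dist : 𝒴 → 𝒴 → ℝ) (r ε δ z α β : ℝ) (t : ℕ)
    (Y : Fin t → 𝒴) (ℬ : 𝒴 → Measure 𝒴)
    (hr : 0 < r) (hε : 0 < ε) (hδ : 0 < δ) (hz : 1 ≤ z) (hα : 0 < α)
    -- `(𝒴, dist)` is a semimetric space:
    (hsymm : ∀ F₁ F₂, dist F₁ F₂ = dist F₂ F₁)
    (htri : ∀ F₁ F₂ F₃, dist F₁ F₂ ≤ r → dist F₂ F₃ ≤ r →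
      dist F₁ F₃ ≤ z * (dist F₁ F₂ + dist F₂ F₃))
    -- `ℬ` is an `(r, ε, δ)`-masking mechanism which is `(α/(2z), β)`-concentrated:
    (hconc : ∀ F, ℬ F {y | α / (2 * z) < dist y F} ≤ ENNReal.ofReal β)
    -- parameter requirements:
    (hαr : α ≤ r / (2 * z))
    (ht : (20 / ε) * Real.log (1 + (Real.exp ε - 1) / (2 * δ)) ≤ (t : ℝ))
    -- all the non-private outputs are close to some `Y*`:
    (Ystar : 𝒴) (hY : ∀ i : Fin t, dist Ystar (Y i) < α / (2 * z)) :
    PPEfromOutputs t Y ℬ dist r ε δ z {o : Option 𝒴 | ∀ y : 𝒴, o = some y → α < dist y Ystar}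
      ≤ ENNReal.ofReal β := by
  have hz₀ : 0 < z := by linarith
  have htri : RestrictedTriangle dist r z := htri
  have hρr : α / (2 * z) ≤ r := calc
    α / (2 * z) ≤ α := div_le_self hα.le (by linarith)
    _ ≤ r / (2 * z) := hαr
    _ ≤ r := div_le_self hr.le (by linarith)
  have hclose : ∀ i j, dist (Y i) (Y j) ≤ r / (2 * z) := fun i j =>
    (htri.le_of_le_div hz₀ hρr ((hsymm _ _).le.trans (hY i).le) (hY j).le).trans hαr
  have hL := log_one_add_exp_sub_one_div_pos hε hδ
  have htpos : (0 : ℝ) < t := lt_of_lt_of_le (by positivity) ht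
  have hnoise : 2 / (t * ε) * Real.log (1 + (Real.exp ε - 1) / (2 * δ)) ≤ 1 / 10 := by
    rw [div_mul_eq_mul_div, div_le_iff₀ (by positivity)]
    rw [div_mul_eq_mul_div, div_le_iff₀ hε] at ht
    linarith
  obtain ⟨j, hj⟩ := PPEfromOutputs_le_map_some (by exact_mod_cast htpos) Y ℬ dist hclose hnoise
  calc _ ≤ (ℬ (Y j)).map Option.some _ := hj _
    _ = ℬ (Y j) {y | α < dist y Ystar} := by
      rw [measurableEmbedding_some.map_apply]
      congr 1
      ext y
      simp
    _ ≤ ℬ (Y j) {y | α / (2 * z) < dist y (Y j)} := measure_mono fun y hy => by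
      by_contra hnear
      exact not_le.2 hy
        (htri.le_of_le_div hz₀ hρr (not_lt.1 hnear) ((hsymm _ _).le.trans (hY j).le))
    _ ≤ ENNReal.ofReal β := hconc (Y j)

/-- **Utility of the Private Populous Estimator.** Suppose `(𝒴, dist)` satisfies the
`z`-approximate `r`-restricted triangle inequality, `ℬ` is an `(r, ε, δ)`-masking
mechanism that is `(α/(2z), β)`-concentrated, `α ≤ r/(2z)`, and
`t ≥ (20/ε) ln(1 + (e^ε - 1)/(2δ))`. If the outputs `Y₁, …, Y_t` of the non-private
algorithm admit a `Y*` with `dist(Y*, Y_i) < α/(2z)` for all `i ∈ [t]`, then the output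
`Ỹ` of PPE satisfies `Pr[dist(Ỹ, Y*) > α] ≤ β`; in particular, with probability at least
`1 - β` PPE does not fail (the event measured below includes the failure output `⊥`). -/
theorem ppe_utility {𝒴 : Type*} [MeasurableSpace 𝒴]
    (dist : 𝒴 → 𝒴 → ℝ) (r ε δ z α β : ℝ) (t : ℕ)
    (Y : Fin t → 𝒴) (ℬ : 𝒴 → Measure 𝒴)
    (hr : 0 < r) (hε : 0 < ε) (hδ : 0 < δ) (hz : 1 ≤ z) (hα : 0 < α) (hβ : 0 ≤ β)
    -- `(𝒴, dist)` is a semimetric space: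
    (hrefl : ∀ F, dist F F = 0)
    (hnonneg : ∀ F₁ F₂, 0 ≤ dist F₁ F₂)
    (hsymm : ∀ F₁ F₂, dist F₁ F₂ = dist F₂ F₁)
    (htri : ∀ F₁ F₂ F₃, dist F₁ F₂ ≤ r → dist F₂ F₃ ≤ r →
      dist F₁ F₃ ≤ z * (dist F₁ F₂ + dist F₂ F₃))
    (hdistmeas : Measurable (Function.uncurry dist))
    -- `ℬ` is a randomized algorithm (Markov kernel):
    (hℬprob : ∀ F, IsProbabilityMeasure (ℬ F))
    (hℬmeas : ∀ S : Set 𝒴, MeasurableSet S → Measurable fun F => ℬ F S)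
    -- `ℬ` is an `(r, ε, δ)`-masking mechanism which is `(α/(2z), β)`-concentrated:
    (hmask : ∀ F F', dist F F' ≤ r → Indist ε δ (ℬ F) (ℬ F'))
    (hconc : ∀ F, ℬ F {y | α / (2 * z) < dist y F} ≤ ENNReal.ofReal β)
    -- parameter requirements:
    (hαr : α ≤ r / (2 * z))
    (ht : (20 / ε) * Real.log (1 + (Real.exp ε - 1) / (2 * δ)) ≤ (t : ℝ))
    -- all the non-private outputs are close to some `Y*`:
    (Ystar : 𝒴) (hY : ∀ i : Fin t, dist Ystar (Y i) < α / (2 * z)) :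
    PPEfromOutputs t Y ℬ dist r ε δ z {o : Option 𝒴 | ∀ y : 𝒴, o = some y → α < dist y Ystar}
      ≤ ENNReal.ofReal β :=
  ppe_utility_general dist r ε δ z α β t Y ℬ hr hε hδ hz hα hsymm htri hconc hαr ht Ystar hY
end

section
/- Let (𝒴, dist) be a semimetric space satisfying the z-approximate r-restricted triangle inequality with r > 0 and z ≥ 1, and let t ∈ ℕ with t > 5. For a tuple Y = (Y₁,...,Y_t) ∈ 𝒴^t define q_i(Y) = (1/t)·|{j ∈ [t] : dist(Y_i, Y_j) ≤ r/(2z)}|. Suppose Y, Y' ∈ 𝒴^t differ in exactly one coordinate. If j, j' ∈ [t] satisfy q_j(Y) > 0.6 and q_{j'}(Y') > 0.6, then dist(Y_j, Y'_{j'}) ≤ r. (Proof idea: since t > 5, the sets {k : dist(Y_j, Y_k) ≤ r/(2z)} and {k : dist(Y'_{j'}, Y'_k) ≤ r/(2z)} each have size > 0.6t, so they intersect in a coordinate where Y and Y' agree; the approximate triangle inequality then gives dist(Y_j, Y'_{j'}) ≤ z·(r/(2z) + r/(2z)) = r.) -/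
/-! Two sets of coordinates, each covering more than `0.6 t` of the `t > 5` coordinates, share
at least `1.2 t - t > 1` coordinates, hence one where `Y` and `Y'` agree. That shared point is
within `r / (2z)` of both `Y j` and `Y' j'`, and the restricted triangle inequality bounds their
distance by `z (r / (2z) + r / (2z)) = r`. -/

open Finset

theorem Finset.exists_mem_inter_ne_of_card_add_card_gt {α : Type*} [Fintype α] [DecidableEq α]
    {A B : Finset α} (h : Fintype.card α + 1 < #A + #B) (a : α) : ∃ k ∈ A ∩ B, k ≠ a := by
  refine exists_mem_ne ?_ a
  have := card_union_add_card_inter A B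
  have := card_le_univ (A ∪ B)
  omega

theorem card_add_card_gt_of_three_fifths_lt {t : ℕ} (ht : 5 < t) {m n : ℕ}
    (hm : (0.6 : ℝ) < 1 / t * m) (hn : (0.6 : ℝ) < 1 / t * n) : t + 1 < m + n := by
  have htpos : (0 : ℝ) < t := by positivity
  rw [one_div_mul_eq_div, lt_div_iff₀ htpos] at hm hn
  have h5 : (5 : ℝ) < t := by exact_mod_cast ht
  have : (t : ℝ) + 1 < m + n := by linarith
  exact_mod_cast this

theorem dist_le_of_le_div_two_mul {𝒴 : Type*} (dist : 𝒴 → 𝒴 → ℝ) {r z : ℝ}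
    (hr : 0 < r) (hz : 1 ≤ z)
    (htri : ∀ F₁ F₂ F₃, dist F₁ F₂ ≤ r → dist F₂ F₃ ≤ r →
      dist F₁ F₃ ≤ z * (dist F₁ F₂ + dist F₂ F₃))
    {a b c : 𝒴} (hab : dist a b ≤ r / (2 * z)) (hbc : dist b c ≤ r / (2 * z)) :
    dist a c ≤ r := by
  have hsmall : r / (2 * z) ≤ r := div_le_self hr.le (by linarith)
  calc dist a c ≤ z * (dist a b + dist b c) := htri a b c (hab.trans hsmall) (hbc.trans hsmall)
    _ ≤ z * (r / (2 * z) + r / (2 * z)) := by gcongr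
    _ = r := by field_simp; ring

theorem popular_candidates_close_general {𝒴 : Type*} (dist : 𝒴 → 𝒴 → ℝ) (r z : ℝ) (t : ℕ)
    (hr : 0 < r) (hz : 1 ≤ z) (ht : 5 < t)
    -- `(𝒴, dist)` is a semimetric space:
    (hsymm : ∀ F₁ F₂, dist F₁ F₂ = dist F₂ F₁)
    (htri : ∀ F₁ F₂ F₃, dist F₁ F₂ ≤ r → dist F₂ F₃ ≤ r →
      dist F₁ F₃ ≤ z * (dist F₁ F₂ + dist F₂ F₃))
    (Y Y' : Fin t → 𝒴)
    -- `Y` and `Y'` differ in exactly one coordinate: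
    (hdiff : ∃ i₀ : Fin t, Y i₀ ≠ Y' i₀ ∧ ∀ k : Fin t, k ≠ i₀ → Y k = Y' k)
    (q : (Fin t → 𝒴) → Fin t → ℝ)
    (hq : ∀ (W : Fin t → 𝒴) (i : Fin t), q W i =
      (1 / (t : ℝ)) * ((Finset.univ.filter fun k => dist (W i) (W k) ≤ r / (2 * z)).card : ℝ))
    (j j' : Fin t) (hj : (0.6 : ℝ) < q Y j) (hj' : (0.6 : ℝ) < q Y' j') :
    dist (Y j) (Y' j') ≤ r := by
  obtain ⟨i₀, -, hagree⟩ := hdiff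
  rw [hq] at hj hj'
  have hcard := card_add_card_gt_of_three_fifths_lt ht hj hj'
  obtain ⟨k, hk, hki₀⟩ :=
    exists_mem_inter_ne_of_card_add_card_gt (by rwa [Fintype.card_fin]) i₀
  simp only [mem_inter, mem_filter, mem_univ, true_and] at hk
  refine dist_le_of_le_div_two_mul dist hr hz htri hk.1 ?_
  rw [hagree k hki₀, hsymm]
  exact hk.2

/-- If `(𝒴, dist)` satisfies the `z`-approximate `r`-restricted triangle inequality,
`t > 5`, and the tuples `Y, Y' ∈ 𝒴^t` differ in exactly one coordinate, then any two
"popular" candidates are close: if `q_j(Y) > 0.6` and `q_{j'}(Y') > 0.6`, where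
`q_i(W) = (1/t)|{k : dist(W_i, W_k) ≤ r/(2z)}|`, then `dist(Y_j, Y'_{j'}) ≤ r`. -/
theorem popular_candidates_close {𝒴 : Type*} (dist : 𝒴 → 𝒴 → ℝ) (r z : ℝ) (t : ℕ)
    (hr : 0 < r) (hz : 1 ≤ z) (ht : 5 < t)
    -- `(𝒴, dist)` is a semimetric space:
    (hrefl : ∀ F, dist F F = 0)
    (hnonneg : ∀ F₁ F₂, 0 ≤ dist F₁ F₂)
    (hsymm : ∀ F₁ F₂, dist F₁ F₂ = dist F₂ F₁)
    (htri : ∀ F₁ F₂ F₃, dist F₁ F₂ ≤ r → dist F₂ F₃ ≤ r →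
      dist F₁ F₃ ≤ z * (dist F₁ F₂ + dist F₂ F₃))
    (Y Y' : Fin t → 𝒴)
    -- `Y` and `Y'` differ in exactly one coordinate:
    (hdiff : ∃ i₀ : Fin t, Y i₀ ≠ Y' i₀ ∧ ∀ k : Fin t, k ≠ i₀ → Y k = Y' k)
    (q : (Fin t → 𝒴) → Fin t → ℝ)
    (hq : ∀ (W : Fin t → 𝒴) (i : Fin t), q W i =
      (1 / (t : ℝ)) * ((Finset.univ.filter fun k => dist (W i) (W k) ≤ r / (2 * z)).card : ℝ))
    (j j' : Fin t) (hj : (0.6 : ℝ) < q Y j) (hj' : (0.6 : ℝ) < q Y' j') :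
    dist (Y j) (Y' j') ≤ r :=
  popular_candidates_close_general dist r z t hr hz ht hsymm htri Y Y' hdiff q hq j j' hj hj'
end

section
/- Let Δ, ε, δ > 0 and let TLap(Δ, ε, δ) be the truncated Laplace distribution, i.e., the probability distribution on ℝ with density proportional to e^{−ε|x|/Δ} on the interval [−B, B] with B = (Δ/ε)·ln(1 + (e^ε − 1)/(2δ)) and zero outside it. Let f be a real-valued statistic of datasets with sensitivity at most Δ, meaning |f(D) − f(D')| ≤ Δ for all datasets D, D' differing in one element. Then the mechanism M(D) = f(D) + Z with Z ~ TLap(Δ, ε, δ) is (ε, δ)-differentially private: for all neighboring D, D' and all measurable S ⊆ ℝ, Pr[M(D) ∈ S] ≤ e^ε·Pr[M(D') ∈ S] + δ. Moreover, |Z| ≤ B with probability 1. -/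
/-!
Shifting the truncated Laplace density on `[-B, B]` by `c` with `0 ≤ c ≤ Δ` changes it by a
factor at most `e^ε`, except on the sliver `(B - c, B]` at the edge of the support, whose mass is
at most `(Δ/ε) e^{-εB/Δ} (e^ε - 1)`. The bound `B` is chosen exactly so that this equals `δ` times
the total mass `2 (Δ/ε) (1 - e^{-εB/Δ})`. Negative shifts follow from the symmetry of the density.
-/

open MeasureTheory

/-- Two datasets are neighboring if they have the same length and differ in (at most)
one element. -/
def Neighboring {𝒳 : Type*} (D D' : List 𝒳) : Prop :=
  D.length = D'.length ∧ ∃ i : ℕ, ∀ j : ℕ, j ≠ i → D[j]? = D'[j]?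

open Set
open scoped ENNReal

theorem lintegral_ofReal_exp_mul_Ioc {k : ℝ} (hk : k ≠ 0) {a b : ℝ} (hab : a ≤ b) :
    ∫⁻ x in Ioc a b, ENNReal.ofReal (Real.exp (k * x)) =
      ENNReal.ofReal ((Real.exp (k * b) - Real.exp (k * a)) / k) := by
  rw [← ofReal_integral_eq_lintegral_ofReal
    (by fun_prop : Continuous fun x => Real.exp (k * x)).integrableOn_Ioc
    (.of_forall fun x => (Real.exp_pos _).le), ← intervalIntegral.integral_of_le hab,
    intervalIntegral.integral_comp_mul_left (fun x => Real.exp x) hk, integral_exp, smul_eq_mul,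
    inv_mul_eq_div]

section Group

variable {G : Type*} [MeasurableSpace G] [AddGroup G]
  (μ : Measure G) {h : G → ℝ≥0∞} {T : Set G}

theorem withDensity_preimage_add_right_le [MeasurableAdd G] [μ.IsAddRightInvariant]
    (hh : Measurable h) {r : G → ℝ≥0∞} {K : ℝ≥0∞} {c : G} (hle : ∀ x, h x ≤ K * h (x + c) + r x)
    (hT : MeasurableSet T) :
    μ.withDensity h ((· + c) ⁻¹' T) ≤ K * μ.withDensity h T + ∫⁻ x, r x ∂μ := by
  have hhc : Measurable fun x => h (x + c) := hh.comp (measurable_add_const c)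
  rw [withDensity_apply _ (hT.preimage (measurable_add_const c)), withDensity_apply _ hT]
  calc ∫⁻ x in (· + c) ⁻¹' T, h x ∂μ
      ≤ ∫⁻ x in (· + c) ⁻¹' T, (K * h (x + c) + r x) ∂μ := lintegral_mono hle
    _ = K * ∫⁻ x in (· + c) ⁻¹' T, h (x + c) ∂μ + ∫⁻ x in (· + c) ⁻¹' T, r x ∂μ := by
      rw [lintegral_add_left (hhc.const_mul K), lintegral_const_mul K hhc]
    _ ≤ K * ∫⁻ x in T, h x ∂μ + ∫⁻ x, r x ∂μ := by
      rw [(measurePreserving_add_right μ c).setLIntegral_comp_preimage hT hh]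
      gcongr
      exact Measure.restrict_le_self

theorem withDensity_preimage_neg [MeasurableNeg G] [μ.IsNegInvariant] (hh : Measurable h)
    (h_even : ∀ x, h (-x) = h x) (hT : MeasurableSet T) :
    μ.withDensity h (Neg.neg ⁻¹' T) = μ.withDensity h T := by
  rw [withDensity_apply _ (hT.preimage measurable_neg), withDensity_apply _ hT,
    ← (Measure.measurePreserving_neg μ).setLIntegral_comp_preimage hT hh]
  simp only [h_even]

end Group

theorem smul_inv_measure_univ_apply_le {α : Type*} [MeasurableSpace α] {μ : Measure α}
    (h0 : μ univ ≠ 0) (htop : μ univ ≠ ∞) {s t : Set α} {K δ : ℝ≥0∞}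
    (h : μ s ≤ K * μ t + δ * μ univ) :
    ((μ univ)⁻¹ • μ) s ≤ K * ((μ univ)⁻¹ • μ) t + δ := by
  simp only [Measure.smul_apply, smul_eq_mul]
  calc (μ univ)⁻¹ * μ s ≤ (μ univ)⁻¹ * (K * μ t + δ * μ univ) := by gcongr
    _ = K * ((μ univ)⁻¹ * μ t) + δ * ((μ univ)⁻¹ * μ univ) := by ring
    _ = K * ((μ univ)⁻¹ * μ t) + δ := by rw [ENNReal.inv_mul_cancel h0 htop, mul_one]

section Shift

variable {ν : Measure ℝ} {Δ : ℝ} {K R : ℝ≥0∞}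

theorem measure_preimage_add_le_of_abs_le
    (hneg : ∀ T, MeasurableSet T → ν (Neg.neg ⁻¹' T) = ν T)
    (hshift : ∀ c, 0 ≤ c → c ≤ Δ → ∀ T, MeasurableSet T → ν ((· + c) ⁻¹' T) ≤ K * ν T + R)
    {c : ℝ} (hc : |c| ≤ Δ) {T : Set ℝ} (hT : MeasurableSet T) :
    ν ((· + c) ⁻¹' T) ≤ K * ν T + R := by
  rcases le_total 0 c with hc0 | hc0
  · exact hshift c hc0 (le_of_abs_le hc) T hT
  · have hreflect : (· + c) ⁻¹' T = Neg.neg ⁻¹' ((· + -c) ⁻¹' (Neg.neg ⁻¹' T)) := by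
      ext x; simp [add_comm]
    rw [hreflect, hneg _ ((hT.preimage measurable_neg).preimage (measurable_add_const _)),
      ← hneg T hT]
    exact hshift (-c) (neg_nonneg.2 hc0) (neg_le.1 (neg_le_of_abs_le hc)) _
      (hT.preimage measurable_neg)

theorem map_const_add_apply_le
    (hshift : ∀ c, |c| ≤ Δ → ∀ T, MeasurableSet T → ν ((· + c) ⁻¹' T) ≤ K * ν T + R)
    {a b : ℝ} (hab : |a - b| ≤ Δ) {S : Set ℝ} (hS : MeasurableSet S) :
    ν.map (a + ·) S ≤ K * ν.map (b + ·) S + R := by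
  have hpre : (a + ·) ⁻¹' S = (· + (a - b)) ⁻¹' ((b + ·) ⁻¹' S) := by
    ext x; simp [show b + (x + (a - b)) = a + x by ring]
  rw [Measure.map_apply (measurable_const_add a) hS, Measure.map_apply (measurable_const_add b) hS,
    hpre]
  exact hshift _ hab _ (hS.preimage (measurable_const_add b))

end Shift

section TruncLaplace

variable {Δ ε B : ℝ}

noncomputable def truncLaplaceDensity (Δ ε B : ℝ) : ℝ → ℝ≥0∞ :=
  (Icc (-B) B).indicator fun x => ENNReal.ofReal (Real.exp (-(ε * |x|) / Δ))

theorem measurable_truncLaplaceDensity : Measurable (truncLaplaceDensity Δ ε B) :=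
  Measurable.indicator (by fun_prop) measurableSet_Icc

theorem truncLaplaceDensity_neg (x : ℝ) :
    truncLaplaceDensity Δ ε B (-x) = truncLaplaceDensity Δ ε B x := by
  simp only [truncLaplaceDensity, indicator, mem_Icc, neg_le_neg_iff, abs_neg, neg_le, and_comm]

theorem truncLaplaceDensity_le_shift (hΔ : 0 < Δ) (hε : 0 < ε) {c : ℝ} (hc0 : 0 ≤ c)
    (hcΔ : c ≤ Δ) (x : ℝ) :
    truncLaplaceDensity Δ ε B x ≤
      ENNReal.ofReal (Real.exp ε) * truncLaplaceDensity Δ ε B (x + c) +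
        (Ioc (B - c) B).indicator (fun y => ENNReal.ofReal (Real.exp (-(ε / Δ) * y))) x := by
  by_cases hx : x ∈ Icc (-B) B
  swap
  · simp [truncLaplaceDensity, hx]
  by_cases hxc : x + c ∈ Icc (-B) B
  · have hexp : Real.exp (-(ε * |x|) / Δ) ≤ Real.exp ε * Real.exp (-(ε * |x + c|) / Δ) := by
      rw [← Real.exp_add, Real.exp_le_exp, ← sub_nonneg]
      have habs : |x + c| ≤ |x| + Δ :=
        (abs_add_le x c).trans (by rw [abs_of_nonneg hc0]; linarith)
      have hdiff : ε + -(ε * |x + c|) / Δ - -(ε * |x|) / Δ = ε * (|x| + Δ - |x + c|) / Δ := by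
        field_simp; ring
      rw [hdiff]
      exact div_nonneg (mul_nonneg hε.le (sub_nonneg.2 habs)) hΔ.le
    rw [truncLaplaceDensity, indicator_of_mem hx, indicator_of_mem hxc, ← ENNReal.ofReal_mul
      (Real.exp_pos _).le]
    exact le_add_right (ENNReal.ofReal_le_ofReal hexp)
  · have htail : x ∈ Ioc (B - c) B := by
      simp only [mem_Icc, not_and_or, not_le] at hx hxc ⊢
      refine ⟨?_, hx.2⟩
      rcases hxc with h | h <;> linarith
    rw [truncLaplaceDensity, indicator_of_mem hx, indicator_of_mem htail]
    refine le_add_left (ENNReal.ofReal_le_ofReal (Real.exp_le_exp.2 ?_))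
    rw [neg_div, neg_mul, neg_le_neg_iff, div_mul_eq_mul_div]
    gcongr
    exact le_abs_self x

theorem truncLaplace_preimage_add_le (hΔ : 0 < Δ) (hε : 0 < ε) {c : ℝ} (hc0 : 0 ≤ c)
    (hcΔ : c ≤ Δ) {T : Set ℝ} (hT : MeasurableSet T) :
    volume.withDensity (truncLaplaceDensity Δ ε B) ((· + c) ⁻¹' T) ≤
      ENNReal.ofReal (Real.exp ε) * volume.withDensity (truncLaplaceDensity Δ ε B) T +
        ENNReal.ofReal (Δ / ε * Real.exp (-(ε * B) / Δ) * (Real.exp ε - 1)) := by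
  refine (withDensity_preimage_add_right_le volume measurable_truncLaplaceDensity
    (truncLaplaceDensity_le_shift hΔ hε hc0 hcΔ) hT).trans ?_
  gcongr
  rw [lintegral_indicator measurableSet_Ioc,
    lintegral_ofReal_exp_mul_Ioc (neg_ne_zero.2 (by positivity)) (by linarith)]
  refine ENNReal.ofReal_le_ofReal ?_
  have hcε : Real.exp (ε * c / Δ) ≤ Real.exp ε :=
    Real.exp_le_exp.2 ((div_le_iff₀ hΔ).2 (by nlinarith))
  have hsplit :
      Real.exp (-(ε / Δ) * (B - c)) = Real.exp (-(ε * B) / Δ) * Real.exp (ε * c / Δ) := by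
    rw [← Real.exp_add]; ring_nf
  rw [hsplit, show -(ε / Δ) * B = -(ε * B) / Δ by ring]
  calc (Real.exp (-(ε * B) / Δ) - Real.exp (-(ε * B) / Δ) * Real.exp (ε * c / Δ)) / -(ε / Δ)
      = Δ / ε * Real.exp (-(ε * B) / Δ) * (Real.exp (ε * c / Δ) - 1) := by
        field_simp; ring
    _ ≤ Δ / ε * Real.exp (-(ε * B) / Δ) * (Real.exp ε - 1) := by gcongr

theorem truncLaplace_univ (hΔ : 0 < Δ) (hε : 0 < ε) (hB : 0 ≤ B) :
    volume.withDensity (truncLaplaceDensity Δ ε B) univ =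
      ENNReal.ofReal (2 * (Δ / ε) * (1 - Real.exp (-(ε * B) / Δ))) := by
  have hk : ε / Δ ≠ 0 := by positivity
  have hright : ∫⁻ x in Ioc 0 B, ENNReal.ofReal (Real.exp (-(ε * |x|) / Δ)) =
      ENNReal.ofReal (Δ / ε * (1 - Real.exp (-(ε * B) / Δ))) := by
    rw [setLIntegral_congr_fun measurableSet_Ioc (g := fun x => ENNReal.ofReal
      (Real.exp (-(ε / Δ) * x))) fun x hx => by rw [abs_of_pos hx.1]; ring_nf,
      lintegral_ofReal_exp_mul_Ioc (neg_ne_zero.2 hk) hB]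
    congr 1; rw [mul_zero, Real.exp_zero]; field_simp; ring_nf
  have hleft : ∫⁻ x in Ioc (-B) 0, ENNReal.ofReal (Real.exp (-(ε * |x|) / Δ)) =
      ENNReal.ofReal (Δ / ε * (1 - Real.exp (-(ε * B) / Δ))) := by
    rw [setLIntegral_congr_fun measurableSet_Ioc (g := fun x => ENNReal.ofReal
      (Real.exp (ε / Δ * x))) fun x hx => by rw [abs_of_nonpos hx.2]; ring_nf,
      lintegral_ofReal_exp_mul_Ioc hk (by linarith)]
    congr 1; rw [mul_zero, Real.exp_zero]; field_simp
  have hnonneg : 0 ≤ Δ / ε * (1 - Real.exp (-(ε * B) / Δ)) := by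
    refine mul_nonneg (by positivity) (sub_nonneg.2 (Real.exp_le_one_iff.2 ?_))
    rw [neg_div, neg_nonpos]; positivity
  rw [withDensity_apply _ MeasurableSet.univ, Measure.restrict_univ, truncLaplaceDensity,
    lintegral_indicator measurableSet_Icc, setLIntegral_congr Ioc_ae_eq_Icc.symm,
    ← Ioc_union_Ioc_eq_Ioc (neg_nonpos.2 hB) hB,
    lintegral_union measurableSet_Ioc (Ioc_disjoint_Ioc_of_le le_rfl), hleft, hright,
    ← ENNReal.ofReal_add hnonneg hnonneg]
  ring_nf

end TruncLaplace

section TLap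

variable {Δ ε δ : ℝ}

noncomputable def truncLaplaceBound (Δ ε δ : ℝ) : ℝ :=
  Δ / ε * Real.log (1 + (Real.exp ε - 1) / (2 * δ))

theorem TLap_eq (Δ ε δ : ℝ) :
    TLap Δ ε δ =
      (volume.withDensity (truncLaplaceDensity Δ ε (truncLaplaceBound Δ ε δ)) univ)⁻¹ •
        volume.withDensity (truncLaplaceDensity Δ ε (truncLaplaceBound Δ ε δ)) :=
  rfl

theorem truncLaplaceBound_nonneg (hΔ : 0 < Δ) (hε : 0 < ε) (hδ : 0 < δ) :
    0 ≤ truncLaplaceBound Δ ε δ :=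
  mul_nonneg (by positivity) (Real.log_nonneg (le_add_of_nonneg_right
    (div_nonneg (by linarith [Real.add_one_le_exp ε]) (by positivity))))

theorem exp_neg_truncLaplaceBound_mul (hΔ : 0 < Δ) (hε : 0 < ε) (hδ : 0 < δ) :
    Real.exp (-(ε * truncLaplaceBound Δ ε δ) / Δ) * (Real.exp ε - 1) =
      2 * δ * (1 - Real.exp (-(ε * truncLaplaceBound Δ ε δ) / Δ)) := by
  have hexp : 0 < Real.exp ε - 1 := by linarith [Real.add_one_lt_exp hε.ne']
  have hden : 2 * δ + (Real.exp ε - 1) ≠ 0 := by positivity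
  rw [truncLaplaceBound, show -(ε * (Δ / ε * Real.log (1 + (Real.exp ε - 1) / (2 * δ)))) / Δ =
    -Real.log (1 + (Real.exp ε - 1) / (2 * δ)) by field_simp, Real.exp_neg,
    Real.exp_log (by positivity)]
  field_simp
  ring

theorem TLap_preimage_add_le (hΔ : 0 < Δ) (hε : 0 < ε) (hδ : 0 < δ) {c : ℝ} (hc : |c| ≤ Δ)
    {T : Set ℝ} (hT : MeasurableSet T) :
    TLap Δ ε δ ((· + c) ⁻¹' T) ≤
      ENNReal.ofReal (Real.exp ε) * TLap Δ ε δ T + ENNReal.ofReal δ := by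
  set u := Real.exp (-(ε * truncLaplaceBound Δ ε δ) / Δ)
  have hu := exp_neg_truncLaplaceBound_mul hΔ hε hδ
  have hmass := truncLaplace_univ hΔ hε (truncLaplaceBound_nonneg hΔ hε hδ)
  have hmass_pos : 0 < 2 * (Δ / ε) * (1 - u) := by
    have : 0 < u * (Real.exp ε - 1) :=
      mul_pos (Real.exp_pos _) (by linarith [Real.add_one_lt_exp hε.ne'])
    have : 0 < 1 - u := by nlinarith
    positivity
  rw [TLap_eq]
  refine smul_inv_measure_univ_apply_le
    (by rw [hmass]; exact (ENNReal.ofReal_pos.2 hmass_pos).ne')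
    (by rw [hmass]; exact ENNReal.ofReal_ne_top) ?_
  refine measure_preimage_add_le_of_abs_le
    (fun T hT => withDensity_preimage_neg volume measurable_truncLaplaceDensity
      truncLaplaceDensity_neg hT)
    (fun c hc0 hcΔ T hT => (truncLaplace_preimage_add_le hΔ hε hc0 hcΔ hT).trans_eq ?_) hc hT
  rw [hmass, ← ENNReal.ofReal_mul hδ.le, mul_assoc, hu]
  ring_nf

theorem TLap_ae_abs_le (Δ ε δ : ℝ) : ∀ᵐ z ∂TLap Δ ε δ, |z| ≤ truncLaplaceBound Δ ε δ := by
  rw [TLap_eq, truncLaplaceDensity, withDensity_indicator measurableSet_Icc]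
  refine Measure.ae_smul_measure ?_ _
  exact (withDensity_absolutelyContinuous _ _).ae_le
    ((ae_restrict_mem measurableSet_Icc).mono fun z hz => abs_le.2 hz)

end TLap

/-- **The truncated Laplace mechanism is `(ε, δ)`-differentially private.** If `f` is a
real-valued statistic of datasets with sensitivity at most `Δ`, then the mechanism
`M(D) = f(D) + Z` with `Z ~ TLap(Δ, ε, δ)` satisfies, for all neighboring `D, D'` and all
measurable `S ⊆ ℝ`, `Pr[M(D) ∈ S] ≤ e^ε Pr[M(D') ∈ S] + δ`. Moreover `|Z| ≤ B` almost
surely, where `B = (Δ/ε) ln(1 + (e^ε - 1)/(2δ))`. -/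
theorem truncated_laplace_dp {𝒳 : Type*} (Δ ε δ : ℝ)
    (hΔ : 0 < Δ) (hε : 0 < ε) (hδ : 0 < δ)
    (f : List 𝒳 → ℝ)
    (hsens : ∀ D D' : List 𝒳, Neighboring D D' → |f D - f D'| ≤ Δ) :
    (∀ D D' : List 𝒳, Neighboring D D' → ∀ S : Set ℝ, MeasurableSet S →
      (TLap Δ ε δ).map (fun zv => f D + zv) S ≤
        ENNReal.ofReal (Real.exp ε) * (TLap Δ ε δ).map (fun zv => f D' + zv) S +
          ENNReal.ofReal δ) ∧
    (∀ᵐ zv ∂(TLap Δ ε δ),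
      |zv| ≤ (Δ / ε) * Real.log (1 + (Real.exp ε - 1) / (2 * δ))) :=
  ⟨fun D D' hDD' _ hS => map_const_add_apply_le
      (fun _ hc _ hT => TLap_preimage_add_le hΔ hε hδ hc hT) (hsens D D' hDD') hS,
    TLap_ae_abs_le Δ ε δ⟩
end
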